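/- arXiv:2509.05260 — 3 statements merged into one kernel-verified Lean document; each statement's English description precedes it below -/
import Mathlib

section
/- Let g, h : 𝕋 → ℝ be continuous functions on 𝕋 = ℝ/ℤ with ∫_𝕋 g = ∫_𝕋 h = 0, and let K₁, K₂ ≥ 0 satisfy g(x) ≥ −K₁ and h(x) ≥ −K₂ for all x. Then the convolution satisfies (g*h)(x) ≥ −(K₁‖h‖₁ + K₂‖g‖₁)/2 for all x ∈ 𝕋. -/
/-- One-sided bound for the convolution of two mean-zero functions on `𝕋`
(modelled as continuous `1`-periodic functions on `ℝ`):
`(g*h)(x) ≥ -(K₁‖h‖₁ + K₂‖g‖₁)/2`. -/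
theorem conv_min_l1 (g h : ℝ → ℝ) (hg : Continuous g) (hh : Continuous h)
    (hgp : Function.Periodic g 1) (hhp : Function.Periodic h 1)
    (hgint : ∫ x in (0:ℝ)..1, g x = 0) (hhint : ∫ x in (0:ℝ)..1, h x = 0)
    (K₁ K₂ : ℝ) (hK₁ : 0 ≤ K₁) (hK₂ : 0 ≤ K₂)
    (hgl : ∀ x : ℝ, -K₁ ≤ g x) (hhl : ∀ x : ℝ, -K₂ ≤ h x) :
    ∀ x : ℝ,
      -((K₁ * ∫ y in (0:ℝ)..1, |h y|) + K₂ * ∫ y in (0:ℝ)..1, |g y|) / 2 ≤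
        ∫ y in (0:ℝ)..1, g (x - y) * h y := by
  intro x
  -- continuity facts
  have hgc : Continuous fun y => max (g y) 0 := hg.max continuous_const
  have hhc : Continuous fun y => max (h y) 0 := hh.max continuous_const
  have hgxc : Continuous fun y : ℝ => g (x - y) := hg.comp (by continuity)
  -- pointwise bound
  have key : ∀ y ∈ Set.Icc (0:ℝ) 1,
      -(K₁ * max (h y) 0) - K₂ * max (g (x - y)) 0 ≤ g (x - y) * h y := by
    intro y _
    have ha := hgl (x - y); have hb := hhl y
    rcases le_or_gt 0 (g (x - y)) with h1 | h1 <;> rcases le_or_gt 0 (h y) with h2 | h2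
    · rw [max_eq_left h1, max_eq_left h2]; nlinarith
    · rw [max_eq_left h1, max_eq_right h2.le]; nlinarith
    · rw [max_eq_right h1.le, max_eq_left h2]; nlinarith
    · rw [max_eq_right h1.le, max_eq_right h2.le]; nlinarith
  have int1 : IntervalIntegrable (fun y => -(K₁ * max (h y) 0) - K₂ * max (g (x - y)) 0)
      MeasureTheory.volume 0 1 :=
    (((continuous_const.mul hhc).neg).sub
      (continuous_const.mul (hgxc.max continuous_const))).intervalIntegrable 0 1
  have int2 : IntervalIntegrable (fun y => g (x - y) * h y) MeasureTheory.volume 0 1 := by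
    apply Continuous.intervalIntegrable; exact hgxc.mul hh
  have mono := intervalIntegral.integral_mono_on (by norm_num : (0:ℝ) ≤ 1) int1 int2 key
  -- evaluate the left integral
  have e1 : (∫ y in (0:ℝ)..1, max (g (x - y)) 0) = ∫ y in (0:ℝ)..1, max (g y) 0 := by
    rw [intervalIntegral.integral_comp_sub_left (fun y => max (g y) 0) x]
    have hper : Function.Periodic (fun y => max (g y) 0) 1 := fun y => by simp [hgp y]
    have := hper.intervalIntegral_add_eq (x - 1) 0
    simpa using this
  -- positive part integrals equal half of L¹ norm
  have half : ∀ f : ℝ → ℝ, Continuous f → (∫ y in (0:ℝ)..1, f y) = 0 →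
      (∫ y in (0:ℝ)..1, max (f y) 0) = (∫ y in (0:ℝ)..1, |f y|) / 2 := by
    intro f hf hf0
    have habs : IntervalIntegrable (fun y => |f y|) MeasureTheory.volume 0 1 :=
      (hf.abs).intervalIntegrable 0 1
    have hfi : IntervalIntegrable f MeasureTheory.volume 0 1 := hf.intervalIntegrable 0 1
    have : (∫ y in (0:ℝ)..1, max (f y) 0) = ∫ y in (0:ℝ)..1, (f y + |f y|) / 2 := by
      apply intervalIntegral.integral_congr
      intro y _
      dsimp only
      rcases le_or_gt 0 (f y) with h1 | h1
      · rw [max_eq_left h1, abs_of_nonneg h1]; ring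
      · rw [max_eq_right h1.le, abs_of_neg h1]; ring
    rw [this]
    have : (∫ y in (0:ℝ)..1, (f y + |f y|) / 2)
        = ((∫ y in (0:ℝ)..1, f y) + ∫ y in (0:ℝ)..1, |f y|) / 2 := by
      rw [← intervalIntegral.integral_add hfi habs]
      simp [intervalIntegral.integral_div]
    rw [this, hf0]; ring
  have hg2 := half g hg hgint
  have hh2 := half h hh hhint
  -- compute the lower integral
  have lhs_eq : (∫ y in (0:ℝ)..1, (-(K₁ * max (h y) 0) - K₂ * max (g (x - y)) 0))
      = -(K₁ * ((∫ y in (0:ℝ)..1, |h y|) / 2)) - K₂ * ((∫ y in (0:ℝ)..1, |g y|) / 2) := by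
    have i1 : IntervalIntegrable (fun y => K₁ * max (h y) 0) MeasureTheory.volume 0 1 :=
      (continuous_const.mul hhc).intervalIntegrable 0 1
    have i2 : IntervalIntegrable (fun y => K₂ * max (g (x - y)) 0) MeasureTheory.volume 0 1 :=
      (continuous_const.mul (hgxc.max continuous_const)).intervalIntegrable 0 1
    have i1' : IntervalIntegrable (fun y => -(K₁ * max (h y) 0)) MeasureTheory.volume 0 1 := i1.neg
    rw [intervalIntegral.integral_sub i1' i2, intervalIntegral.integral_neg,
      intervalIntegral.integral_const_mul, intervalIntegral.integral_const_mul, e1, hg2, hh2]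
  linarith [mono, lhs_eq.symm.le, lhs_eq.le]
end

section
/- Let A ⊂ ℤ\{0} be a finite symmetric set, and let K > 0 satisfy 1̂_A(x) + K ≥ 0 for all x ∈ 𝕋. Then every subset B ⊆ A of size |B| ≥ 2K² satisfies #{(b₁, b₂) ∈ B × B : b₁ − b₂ ∈ A} ≥ |B|²/(2K). -/
/-!
Put `f = 1̂_B` and `g = 1̂_A + K`, a nonnegative weight that is real because `A` is symmetric.
Orthogonality of the characters `e(nx)` on `[0, 1]` gives `∫ g = K` (as `0 ∉ A`),
`∫ f g = |B|` (each `b ∈ B` pairs with `-b ∈ A` only) and `∫ |f|² g = E + K |B|`, where `E`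
counts the pairs `(b₁, b₂) ∈ B × B` with `b₁ - b₂ ∈ A`. Cauchy–Schwarz for the measure `g dx`,
in the form `0 ≤ ∫ |f - c|² g` with `c = |B| / K`, yields `|B|² ≤ K (E + K |B|)`, and
`|B| ≥ 2K²` lets `E` absorb the term `K² |B|`.
-/

/-- `e(x) = e^{2πix}`. -/
noncomputable def eC (x : ℝ) : ℂ := Complex.exp (2 * Real.pi * Complex.I * x)

/-- `1̂_A(x) = ∑_{a ∈ A} e(ax)`. -/
noncomputable def fhat (A : Finset ℤ) (x : ℝ) : ℂ := ∑ a ∈ A, eC ((a : ℝ) * x)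

open Finset intervalIntegral
open scoped ComplexConjugate

lemma integral_mul_add_const {F G : ℝ → ℂ} (hF : Continuous F) (hG : Continuous G) (k : ℂ)
    (a b : ℝ) :
    ∫ x in a..b, F x * (G x + k) = (∫ x in a..b, F x * G x) + k * ∫ x in a..b, F x := by
  simp_rw [mul_add, mul_comm _ k]
  rw [integral_add, integral_const_mul] <;> apply Continuous.intervalIntegrable <;> fun_prop

lemma re_intervalIntegral_of_continuous {f : ℝ → ℂ} (hf : Continuous f) (a b : ℝ) :
    (∫ x in a..b, f x).re = ∫ x in a..b, (f x).re :=
  (intervalIntegral_re (hf.intervalIntegrable a b)).symm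

lemma two_mul_re_integral_mul_sub_le {f g : ℝ → ℂ} (hf : Continuous f) (hg : Continuous g)
    (hg_im : ∀ x, (g x).im = 0) (hg_nonneg : ∀ x, 0 ≤ (g x).re) {a b : ℝ} (hab : a ≤ b)
    (c : ℝ) :
    2 * c * (∫ x in a..b, f x * g x).re - c ^ 2 * (∫ x in a..b, g x).re ≤
      (∫ x in a..b, conj (f x) * f x * g x).re := by
  have hpt (x : ℝ) : 2 * c * (f x * g x).re - c ^ 2 * (g x).re ≤ (conj (f x) * f x * g x).re := by
    have h : 2 * c * (f x).re - c ^ 2 ≤ ‖f x‖ ^ 2 := by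
      nlinarith [sq_nonneg ((f x).re - c), Complex.re_sq_le_normSq (f x),
        Complex.normSq_eq_norm_sq (f x)]
    rw [Complex.conj_mul', Complex.mul_re, Complex.mul_re, hg_im, ← Complex.ofReal_pow,
      Complex.ofReal_re, Complex.ofReal_im]
    nlinarith [mul_le_mul_of_nonneg_right h (hg_nonneg x)]
  rw [re_intervalIntegral_of_continuous (f := fun x => f x * g x) (by fun_prop),
    re_intervalIntegral_of_continuous hg, re_intervalIntegral_of_continuous (by fun_prop),
    ← integral_const_mul, ← integral_const_mul, ← integral_sub]
  · exact integral_mono_on hab ((by fun_prop : Continuous _).intervalIntegrable _ _)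
      ((by fun_prop : Continuous _).intervalIntegrable _ _) fun x _ => hpt x
  all_goals apply Continuous.intervalIntegrable; fun_prop

lemma eC_add (y z : ℝ) : eC (y + z) = eC y * eC z := by
  rw [eC, eC, eC, ← Complex.exp_add]
  push_cast
  ring_nf

lemma conj_eC (y : ℝ) : conj (eC y) = eC (-y) := by
  rw [eC, eC, ← Complex.exp_conj]
  simp [map_ofNat]

@[fun_prop]
lemma continuous_eC : Continuous eC := by
  unfold eC
  fun_prop

lemma integral_eC_int_mul (n : ℤ) :
    ∫ x in (0 : ℝ)..1, eC (n * x) = if n = 0 then 1 else 0 := by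
  split_ifs with hn
  · simp [hn, eC]
  have hc : 2 * Real.pi * Complex.I * n ≠ 0 := by simp [Real.pi_ne_zero, hn]
  simp_rw [eC, Complex.ofReal_mul, Complex.ofReal_intCast, ← mul_assoc]
  rw [integral_exp_mul_complex hc]
  simp only [Complex.ofReal_one, Complex.ofReal_zero, mul_one, mul_zero, Complex.exp_zero]
  rw [show 2 * Real.pi * Complex.I * n = n * (2 * Real.pi * Complex.I) by ring,
    Complex.exp_int_mul_two_pi_mul_I, sub_self, zero_div]

lemma sum_eC_mul_sum_eC {α β : Type*} (s : Finset α) (t : Finset β) (f : α → ℤ) (g : β → ℤ)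
    (x : ℝ) :
    (∑ i ∈ s, eC (f i * x)) * (∑ j ∈ t, eC (g j * x)) =
      ∑ p ∈ s ×ˢ t, eC ((f p.1 + g p.2 : ℤ) * x) := by
  rw [sum_mul_sum, sum_product]
  refine sum_congr rfl fun i _ => sum_congr rfl fun j _ => ?_
  rw [← eC_add]
  push_cast
  ring_nf

lemma integral_sum_eC {α : Type*} (s : Finset α) (g : α → ℤ) :
    ∫ x in (0 : ℝ)..1, ∑ i ∈ s, eC (g i * x) = #{i ∈ s | g i = 0} := by
  rw [integral_finsetSum fun i _ => (by fun_prop : Continuous _).intervalIntegrable _ _]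
  simp_rw [integral_eC_int_mul, sum_boole]

@[fun_prop]
lemma continuous_fhat (S : Finset ℤ) : Continuous (fhat S) := by
  unfold fhat
  fun_prop

lemma conj_fhat (S : Finset ℤ) (x : ℝ) : conj (fhat S x) = ∑ s ∈ S, eC ((-s : ℤ) * x) := by
  simp_rw [fhat, map_sum, conj_eC, Int.cast_neg, neg_mul]

lemma im_fhat_eq_zero {A : Finset ℤ} (hsym : ∀ a : ℤ, a ∈ A ↔ -a ∈ A) (x : ℝ) :
    (fhat A x).im = 0 := by
  have h : conj (fhat A x) = fhat A x := by
    rw [conj_fhat, fhat]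
    exact sum_equiv (Equiv.neg ℤ) (fun a => hsym a) fun a _ => by simp
  exact Complex.conj_eq_iff_im.mp h

lemma integral_fhat {S : Finset ℤ} (h0 : 0 ∉ S) : ∫ x in (0 : ℝ)..1, fhat S x = 0 := by
  simp_rw [fhat]
  exact (integral_sum_eC S id).trans (by simp [filter_eq', h0])

lemma integral_fhat_mul_fhat (S T : Finset ℤ) :
    ∫ x in (0 : ℝ)..1, fhat S x * fhat T x = #{s ∈ S | -s ∈ T} := by
  have h (x : ℝ) : fhat S x * fhat T x = ∑ p ∈ S ×ˢ T, eC ((p.1 + p.2 : ℤ) * x) :=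
    sum_eC_mul_sum_eC S T id id x
  simp_rw [h, integral_sum_eC]
  congr 1
  refine card_nbij' Prod.fst (fun s => (s, -s)) ?_ ?_ ?_ ?_ <;>
    grind [Set.MapsTo, Set.LeftInvOn]

lemma conj_fhat_mul_fhat (S : Finset ℤ) (x : ℝ) :
    conj (fhat S x) * fhat S x = ∑ p ∈ S ×ˢ S, eC ((-p.1 + p.2 : ℤ) * x) := by
  rw [conj_fhat]
  exact sum_eC_mul_sum_eC S S _ id x

lemma integral_conj_fhat_mul_fhat (S : Finset ℤ) :
    ∫ x in (0 : ℝ)..1, conj (fhat S x) * fhat S x = #S := by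
  simp_rw [conj_fhat_mul_fhat, integral_sum_eC]
  congr 1
  refine card_nbij' Prod.fst (fun s => (s, s)) ?_ ?_ ?_ ?_ <;>
    grind [Set.MapsTo, Set.LeftInvOn]

lemma integral_conj_fhat_mul_fhat_mul_fhat (S T : Finset ℤ) :
    ∫ x in (0 : ℝ)..1, conj (fhat S x) * fhat S x * fhat T x =
      #{p ∈ S ×ˢ S | p.1 - p.2 ∈ T} := by
  have h (x : ℝ) : conj (fhat S x) * fhat S x * fhat T x =
      ∑ q ∈ (S ×ˢ S) ×ˢ T, eC ((-q.1.1 + q.1.2 + q.2 : ℤ) * x) := by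
    rw [conj_fhat_mul_fhat]
    exact sum_eC_mul_sum_eC _ T _ id x
  simp_rw [h, integral_sum_eC]
  congr 1
  refine card_nbij' Prod.fst (fun p => (p, p.1 - p.2)) ?_ ?_ ?_ ?_ <;>
    grind [Set.MapsTo, Set.LeftInvOn]

lemma integral_fhat_add_const {A : Finset ℤ} (h0 : 0 ∉ A) (k : ℂ) :
    ∫ x in (0 : ℝ)..1, (fhat A x + k) = k := by
  rw [integral_add ((continuous_fhat A).intervalIntegrable _ _) intervalIntegrable_const,
    integral_fhat h0, integral_const]
  simp

/-- Roth's lemma: if `1̂_A + K ≥ 0` then every `B ⊆ A` with `|B| ≥ 2K²` has many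
pairs with difference in `A`. -/
theorem roth_energy (A : Finset ℤ) (h0 : (0 : ℤ) ∉ A) (hsym : ∀ a : ℤ, a ∈ A ↔ -a ∈ A)
    (K : ℝ) (hK : 0 < K) (hmin : ∀ x : ℝ, 0 ≤ (fhat A x).re + K) :
    ∀ B ⊆ A, 2 * K ^ 2 ≤ (B.card : ℝ) →
      (B.card : ℝ) ^ 2 / (2 * K) ≤
        (((B ×ˢ B).filter (fun p : ℤ × ℤ => p.1 - p.2 ∈ A)).card : ℝ) := by
  intro B hB hcard
  have hB0 : 0 ∉ B := fun h => h0 (hB h)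
  have hBA : #{b ∈ B | -b ∈ A} = #B := by
    rw [filter_true_of_mem fun b hb => (hsym b).mp (hB hb)]
  have key := two_mul_re_integral_mul_sub_le (continuous_fhat B)
    (g := fun x => fhat A x + K) (by fun_prop) (fun x => by simp [im_fhat_eq_zero hsym])
    (fun x => by simpa using hmin x) zero_le_one (#B / K)
  rw [integral_mul_add_const (continuous_fhat B) (continuous_fhat A),
    integral_mul_add_const (by fun_prop) (continuous_fhat A), integral_fhat_mul_fhat,
    integral_conj_fhat_mul_fhat_mul_fhat, integral_conj_fhat_mul_fhat, integral_fhat hB0,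
    integral_fhat_add_const h0, hBA] at key
  simp only [mul_zero, add_zero, sub_zero, Complex.natCast_re, Complex.natCast_im,
    Complex.ofReal_re, Complex.ofReal_im, Complex.add_re, Complex.mul_re, tsub_le_iff_right] at key
  have hn : (0 : ℝ) ≤ #B := Nat.cast_nonneg _
  rw [div_le_iff₀ (by positivity)]
  field_simp at key
  nlinarith [mul_le_mul_of_nonneg_right hcard hn]
end

section
/- Let A' ⊂ ℤ\{0} be a finite symmetric set and let L ≥ 1 be such that every arithmetic progression contained in A' has size at most L. Let t ∈ ℤ\{0}, and set A'_t := A' ∩ (A'+t) and B'_t := A'_t \ (−A'_t). Then |B'_t| ≥ |A'_t| / L. -/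
/-- The translate `A + t`. -/
def shiftS (A : Finset ℤ) (t : ℤ) : Finset ℤ := A.image (· + t)

/-- The reflection `-A`. -/
def negS (A : Finset ℤ) : Finset ℤ := A.image (fun a => -a)

/-- If every arithmetic progression in the symmetric set `A'` has size at most `L`,
then `B'_t = A'_t \ (-A'_t)` has size at least `|A'_t|/L`. -/
theorem Bt_large_of_short_progressions (A' : Finset ℤ) (h0 : (0 : ℤ) ∉ A')
    (hsym : ∀ a : ℤ, a ∈ A' ↔ -a ∈ A') (L : ℝ) (hL : 1 ≤ L)
    (hAP : ∀ a d : ℤ, ∀ m : ℕ,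
      ((Finset.range m).image (fun i : ℕ => a + (i : ℤ) * d)) ⊆ A' →
      (((Finset.range m).image (fun i : ℕ => a + (i : ℤ) * d)).card : ℝ) ≤ L)
    (t : ℤ) (ht : t ≠ 0) :
    ((A' ∩ shiftS A' t).card : ℝ) / L ≤
      (((A' ∩ shiftS A' t) \ negS (A' ∩ shiftS A' t)).card : ℝ) := by
  classical
  have hL0 : (0 : ℝ) < L := lt_of_lt_of_le one_pos hL
  -- membership lemmas
  have hshift : ∀ x : ℤ, x ∈ shiftS A' t ↔ x - t ∈ A' := by
    intro x
    simp only [shiftS, Finset.mem_image]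
    constructor
    · rintro ⟨a, ha, rfl⟩; simpa using ha
    · intro h; exact ⟨x - t, h, by ring⟩
  have hneg : ∀ (S : Finset ℤ) (x : ℤ), x ∈ negS S ↔ -x ∈ S := by
    intro S x
    simp only [negS, Finset.mem_image]
    constructor
    · rintro ⟨a, ha, rfl⟩; simpa using ha
    · intro h; exact ⟨-x, h, by ring⟩
  -- injectivity of i ↦ a + i*t on ℕ
  have hinj : ∀ a : ℤ, Function.Injective (fun i : ℕ => a + (i : ℤ) * t) := by
    intro a i j hij
    simp only at hij
    have : (i : ℤ) * t = (j : ℤ) * t := by linarith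
    have : (i : ℤ) = j := mul_right_cancel₀ ht this
    exact_mod_cast this
  -- every AP of length m in A' gives m ≤ L
  have hAP' : ∀ a : ℤ, ∀ m : ℕ,
      (∀ i : ℕ, i < m → a + (i : ℤ) * t ∈ A') → (m : ℝ) ≤ L := by
    intro a m hm
    have hsub : ((Finset.range m).image (fun i : ℕ => a + (i : ℤ) * t)) ⊆ A' := by
      intro y hy
      obtain ⟨i, hi, rfl⟩ := Finset.mem_image.mp hy
      exact hm i (Finset.mem_range.mp hi)
    have := hAP a t m hsub
    rwa [Finset.card_image_of_injective _ (hinj a), Finset.card_range] at this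
  -- existence of an escape index
  have hex : ∀ x : ℤ, ∃ k : ℕ, x + ((k : ℤ) + 1) * t ∉ A' := by
    intro x
    by_contra hcon
    push_neg at hcon
    have hm : ∀ i : ℕ, i < A'.card + 1 → (x + t) + (i : ℤ) * t ∈ A' := by
      intro i _
      have := hcon i
      have heq : (x + t) + (i : ℤ) * t = x + ((i : ℤ) + 1) * t := by ring
      rwa [heq]
    have hsub : ((Finset.range (A'.card + 1)).image
        (fun i : ℕ => (x + t) + (i : ℤ) * t)) ⊆ A' := by
      intro y hy
      obtain ⟨i, hi, rfl⟩ := Finset.mem_image.mp hy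
      exact hm i (Finset.mem_range.mp hi)
    have hcard := Finset.card_le_card hsub
    rw [Finset.card_image_of_injective _ (hinj (x + t)), Finset.card_range] at hcard
    omega
  set K : ℤ → ℕ := fun x => Nat.find (hex x) with hKdef
  have hKspec : ∀ x : ℤ, x + ((K x : ℤ) + 1) * t ∉ A' := fun x => Nat.find_spec (hex x)
  have hKmin : ∀ x : ℤ, ∀ i : ℕ, i < K x → x + ((i : ℤ) + 1) * t ∈ A' := by
    intro x i hi
    exact not_not.mp (Nat.find_min (hex x) hi)
  have hKmem : ∀ x : ℤ, x ∈ A' → ∀ j : ℕ, j ≤ K x → x + (j : ℤ) * t ∈ A' := by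
    intro x hx j hj
    cases j with
    | zero => simpa using hx
    | succ i =>
      have := hKmin x i (by omega)
      have heq : x + ((i : ℤ) + 1) * t = x + ((i + 1 : ℕ) : ℤ) * t := by push_cast; ring
      rwa [heq] at this
  set At := A' ∩ shiftS A' t with hAtdef
  set Bt := At \ negS At with hBtdef
  set φ : ℤ → ℤ := fun x => x + (K x : ℤ) * t with hφdef
  set n : ℕ := ⌊L⌋₊ with hndef
  -- φ maps At into Bt
  have hmaps : ∀ x ∈ At, φ x ∈ Bt := by
    intro x hx
    have hxA : x ∈ A' := (Finset.mem_inter.mp hx).1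
    have hxS : x - t ∈ A' := (hshift x).mp (Finset.mem_inter.mp hx).2
    have h1 : φ x ∈ A' := hKmem x hxA (K x) le_rfl
    have h2 : φ x - t ∈ A' := by
      rcases Nat.eq_zero_or_pos (K x) with h | h
      · simp only [hφdef, h]
        simpa using hxS
      · obtain ⟨i, hi⟩ := Nat.exists_eq_succ_of_ne_zero (Nat.pos_iff_ne_zero.mp h)
        have := hKmem x hxA i (by omega)
        have heq : φ x - t = x + (i : ℤ) * t := by
          simp only [hφdef, hi]; push_cast; ring
        rwa [heq]
    have h3 : φ x ∉ negS At := by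
      intro hcon
      have hm : -φ x ∈ At := (hneg At (φ x)).mp hcon
      have : -φ x - t ∈ A' := (hshift _).mp (Finset.mem_inter.mp hm).2
      have : -(-φ x - t) ∈ A' := (hsym _).mp this
      have heq : -(-φ x - t) = x + ((K x : ℤ) + 1) * t := by
        simp only [hφdef]; ring
      rw [heq] at this
      exact hKspec x this
    refine Finset.mem_sdiff.mpr ⟨Finset.mem_inter.mpr ⟨h1, (hshift _).mpr h2⟩, h3⟩
  -- fibers of φ are small
  have hfib : ∀ b ∈ Bt, (At.filter (fun x => φ x = b)).card ≤ n := by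
    intro b _
    have : (At.filter (fun x => φ x = b)).card ≤ (Finset.range n).card := by
      apply Finset.card_le_card_of_injOn K
      · intro x hx
        obtain ⟨hxAt, hφx⟩ := Finset.mem_filter.mp hx
        have hxA : x ∈ A' := (Finset.mem_inter.mp hxAt).1
        have hxS : x - t ∈ A' := (hshift x).mp (Finset.mem_inter.mp hxAt).2
        -- the AP x - t, x, ..., x + (K x) t of length K x + 2 lies in A'
        have hap : ((K x : ℝ) + 2) ≤ L := by
          have := hAP' (x - t) (K x + 2) ?_
          · push_cast at this; linarith
          · intro i hi
            cases i with
            | zero => simpa using hxS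
            | succ j =>
              have := hKmem x hxA j (by omega)
              have heq : (x - t) + ((j + 1 : ℕ) : ℤ) * t = x + (j : ℤ) * t := by
                push_cast; ring
              rwa [heq]
        have hn2 : K x + 2 ≤ n := by
          rw [hndef]
          apply Nat.le_floor
          push_cast
          linarith
        exact Finset.mem_range.mpr (by omega)
      · intro x1 h1 x2 h2 hK
        have e1 : x1 + (K x1 : ℤ) * t = b := (Finset.mem_filter.mp h1).2
        have e2 : x2 + (K x2 : ℤ) * t = b := (Finset.mem_filter.mp h2).2
        rw [hK] at e1
        linarith [e1, e2]
    simpa using this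
  have hcount : At.card ≤ n * Bt.card :=
    Finset.card_le_mul_card_image_of_maps_to hmaps n hfib
  rw [div_le_iff₀ hL0]
  calc (At.card : ℝ) ≤ (n : ℝ) * Bt.card := by exact_mod_cast hcount
    _ ≤ L * Bt.card := by
        apply mul_le_mul_of_nonneg_right _ (Nat.cast_nonneg _)
        exact Nat.floor_le hL0.le
    _ = (Bt.card : ℝ) * L := by ring
end
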